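/- Ron–Shen duality principle: for every subgroup Λ of ZMod N × ZMod N and every g ∈ ℂ^N, the Gabor system {π(λ)g : λ ∈ Λ} spans ℂ^N if and only if the family (π(μ)g)_{μ ∈ Λ°} over the adjoint subgroup is linearly independent in ℂ^N. -/
import Mathlib


open Complex Finset

/-- The time-frequency shift `π(k,r)` on `ℂ^N ≅ (ZMod N → ℂ)`:
`(π(k,r)f)(j) = e^{2πi·rj/N} · f(j−k)`. -/
noncomputable def tfShift (N : ℕ) (k r : ZMod N) : (ZMod N → ℂ) →ₗ[ℂ] (ZMod N → ℂ) where
  toFun f := fun j => Complex.exp (2 * Real.pi * Complex.I * (((r * j).val : ℂ) / (N : ℂ))) * f (j - k)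
  map_add' f g := by
    funext j
    simp [mul_add]
  map_smul' c f := by
    funext j
    simp [Pi.smul_apply, smul_eq_mul]
    ring

/-- The inner product `⟨f,g⟩ = ∑ⱼ f(j)·conj(g(j))`, linear in the first argument. -/
noncomputable def inn {N : ℕ} [NeZero N] (f g : ZMod N → ℂ) : ℂ :=
  ∑ j, f j * starRingEnd ℂ (g j)

/-- The short-time Fourier transform `V_g f(k,r) = ⟨f, π(k,r)g⟩`. -/
noncomputable def stft {N : ℕ} [NeZero N] (g f : ZMod N → ℂ) (k r : ZMod N) : ℂ :=
  inn f (tfShift N k r g)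

/-- The adjoint subgroup `Λ° = {(k,r) : l·r − k·s = 0 in ZMod N for all (l,s) ∈ Λ}`,
as a set. -/
def adjSet {N : ℕ} (Λ : AddSubgroup (ZMod N × ZMod N)) : Set (ZMod N × ZMod N) :=
  {p | ∀ q ∈ Λ, q.1 * p.2 - p.1 * q.2 = 0}

/-- The underlying finite set of a subgroup `Λ` of `ZMod N × ZMod N`. -/
noncomputable def subFinset {N : ℕ} [NeZero N] (Λ : AddSubgroup (ZMod N × ZMod N)) :
    Finset (ZMod N × ZMod N) :=
  Set.Finite.toFinset (Set.toFinite (Λ : Set (ZMod N × ZMod N)))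

/-- The underlying finite set of the adjoint subgroup `Λ°`. -/
noncomputable def adjFinset {N : ℕ} [NeZero N] (Λ : AddSubgroup (ZMod N × ZMod N)) :
    Finset (ZMod N × ZMod N) :=
  Set.Finite.toFinset (Set.toFinite (adjSet Λ))

/-- The rank-one operator `f ↦ ⟨f,h⟩·g`. -/
noncomputable def rankOne {N : ℕ} [NeZero N] (g h : ZMod N → ℂ) :
    (ZMod N → ℂ) →ₗ[ℂ] (ZMod N → ℂ) where
  toFun f := inn f h • g
  map_add' f f' := by
    simp [inn, add_mul, Finset.sum_add_distrib, add_smul]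
  map_smul' c f := by
    simp [inn, Finset.mul_sum, mul_assoc, mul_smul, smul_smul]

/-- The Gabor frame-type operator `S_{g,h,Λ} f = ∑_{λ∈Λ} ⟨f, π(λ)h⟩ · π(λ)g`. -/
noncomputable def gaborTypeOp (N : ℕ) [NeZero N] (Λ : AddSubgroup (ZMod N × ZMod N))
    (g h : ZMod N → ℂ) : (ZMod N → ℂ) →ₗ[ℂ] (ZMod N → ℂ) :=
  ∑ lam ∈ subFinset Λ, rankOne (tfShift N lam.1 lam.2 g) (tfShift N lam.1 lam.2 h)


namespace RonShen
variable {N : ℕ} [NeZero N]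

noncomputable def E : ZMod N → ℂ := ⇑(ZMod.stdAddChar (N := N))

lemma E_apply (x : ZMod N) : E x = Complex.exp (2 * Real.pi * Complex.I * ((x.val : ℂ) / (N : ℂ))) := by
  rw [E, ZMod.stdAddChar_apply, ZMod.toCircle_apply, mul_div_assoc]

lemma E_add (x y : ZMod N) : E (x + y) = E x * E y := AddChar.map_add_eq_mul _ x y
lemma E_zero : E (0 : ZMod N) = 1 := AddChar.map_zero_eq_one _
lemma E_eq_one_iff {x : ZMod N} : E x = 1 ↔ x = 0 := by
  constructor
  · intro h
    have := ZMod.injective_stdAddChar (N := N) (a₁ := x) (a₂ := 0)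
    simp only [AddChar.map_zero_eq_one] at this
    exact this h
  · rintro rfl; exact E_zero
lemma E_neg (x : ZMod N) : E (-x) = (E x)⁻¹ := AddChar.map_neg_eq_inv _ x
lemma E_ne_zero (x : ZMod N) : E x ≠ 0 := by
  intro h
  have : E x * E (-x) = 1 := by rw [← E_add]; simp [E_zero]
  rw [h, zero_mul] at this; exact zero_ne_one this
lemma conj_E (x : ZMod N) : (starRingEnd ℂ) (E x) = E (-x) := by
  have h1 : E x = ↑(ZMod.toCircle x) := rfl
  have h2 : E (-x) = ↑(ZMod.toCircle (-x)) := rfl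
  rw [h1, h2, ← Circle.coe_inv_eq_conj, AddChar.map_neg_eq_inv]

lemma char_sum (m : ZMod N) : ∑ x : ZMod N, E (m * x) = if m = 0 then (N : ℂ) else 0 := by
  classical
  have : ∀ x, E (m * x) = (ZMod.stdAddChar.mulShift m) x := by
    intro x; rw [AddChar.mulShift_apply]; rfl
  simp_rw [this]
  rw [AddChar.sum_eq_ite]
  have hiff : ZMod.stdAddChar.mulShift m = 0 ↔ m = 0 := by
    constructor
    · intro h
      by_contra hm
      exact (ZMod.isPrimitive_stdAddChar N hm) (by rw [h]; rfl)
    · rintro rfl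
      ext x
      simp [AddChar.mulShift_apply, E_zero]
  simp [hiff, ZMod.card]

/- ## tfShift basics -/

lemma tfShift_apply (k r : ZMod N) (f : ZMod N → ℂ) (j : ZMod N) :
    tfShift N k r f j = E (r * j) * f (j - k) := by
  rw [E_apply]; rfl

lemma tfShift_tfShift (k r l s : ZMod N) (f : ZMod N → ℂ) :
    tfShift N k r (tfShift N l s f) = E (-(s*k)) • tfShift N (k+l) (r+s) f := by
  funext j
  simp only [tfShift_apply, Pi.smul_apply, smul_eq_mul]
  have h1 : s * (j - k) = -(s*k) + s * j := by ring
  have h2 : (r + s) * j = r * j + s * j := by ring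
  rw [h1, h2, E_add, E_add, sub_sub]
  ring

lemma tfShift_comm {k r l s : ZMod N} (h : r * l = s * k) (f : ZMod N → ℂ) :
    tfShift N k r (tfShift N l s f) = tfShift N l s (tfShift N k r f) := by
  rw [tfShift_tfShift, tfShift_tfShift, h, add_comm l k, add_comm s r]

lemma tfShift_zero (f : ZMod N → ℂ) : tfShift N 0 0 f = f := by
  funext j
  rw [tfShift_apply]
  simp [E_zero]

/- ## inn basics -/

lemma inn_conj (f g : ZMod N → ℂ) : inn f g = starRingEnd ℂ (inn g f) := by
  rw [inn, inn, map_sum]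
  exact Finset.sum_congr rfl fun j _ => by simp [mul_comm]

lemma inn_self_ne_zero {f : ZMod N → ℂ} (hf : f ≠ 0) : inn f f ≠ 0 := by
  have h : inn f f = ((∑ j, Complex.normSq (f j) : ℝ) : ℂ) := by
    rw [inn, Complex.ofReal_sum]
    exact Finset.sum_congr rfl fun j _ => Complex.mul_conj (f j)
  rw [h]
  norm_cast
  have : ∃ j, f j ≠ 0 := by
    by_contra hc
    push_neg at hc
    exact hf (funext hc)
  obtain ⟨j0, hj0⟩ := this
  have : 0 < ∑ j, Complex.normSq (f j) :=
    Finset.sum_pos' (fun j _ => Complex.normSq_nonneg _)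
      ⟨j0, Finset.mem_univ _, by simpa using Complex.normSq_pos.mpr hj0⟩
  exact ne_of_gt this

lemma inn_swap (k r : ZMod N) (f g : ZMod N → ℂ) :
    inn g (tfShift N k r f) = E (-(r*k)) * starRingEnd ℂ (inn f (tfShift N (-k) (-r) g)) := by
  rw [inn, inn, map_sum, Finset.mul_sum]
  rw [← Fintype.sum_equiv (Equiv.addRight k) _
      (fun j => g j * starRingEnd ℂ (tfShift N k r f j)) (fun m => rfl)]
  refine Finset.sum_congr rfl fun m _ => ?_
  simp only [Equiv.coe_addRight, tfShift_apply, map_mul, conj_E, map_mul, RingHom.map_mul,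
    Complex.conj_conj, sub_neg_eq_add, add_sub_cancel_right]
  have h1 : -(r * (m + k)) = -(r*m) + -(r*k) := by ring
  rw [h1, E_add]
  ring

/- ## adjoint subgroup -/

lemma mem_adjSet {Λ : AddSubgroup (ZMod N × ZMod N)} {p : ZMod N × ZMod N} :
    p ∈ adjSet Λ ↔ ∀ q ∈ Λ, q.1 * p.2 - p.1 * q.2 = 0 := Iff.rfl

def adjGroup (Λ : AddSubgroup (ZMod N × ZMod N)) : AddSubgroup (ZMod N × ZMod N) where
  carrier := adjSet Λ
  zero_mem' := by intro q _; simp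
  add_mem' := by
    intro a b ha hb q hq
    have h1 := ha q hq
    have h2 := hb q hq
    simp only [Prod.fst_add, Prod.snd_add]
    linear_combination h1 + h2
  neg_mem' := by
    intro a ha q hq
    have h1 := ha q hq
    simp only [Prod.fst_neg, Prod.snd_neg]
    linear_combination -h1

lemma mem_adjGroup {Λ : AddSubgroup (ZMod N × ZMod N)} {p : ZMod N × ZMod N} :
    p ∈ adjGroup Λ ↔ p ∈ adjSet Λ := Iff.rfl

lemma mem_subFinset {Γ : AddSubgroup (ZMod N × ZMod N)} {p : ZMod N × ZMod N} :
    p ∈ subFinset Γ ↔ p ∈ Γ := by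
  rw [subFinset, Set.Finite.mem_toFinset]; rfl

lemma adjFinset_eq (Λ : AddSubgroup (ZMod N × ZMod N)) :
    adjFinset Λ = subFinset (adjGroup Λ) := by
  ext p
  rw [adjFinset, Set.Finite.mem_toFinset, mem_subFinset, mem_adjGroup]

lemma mem_adjFinset {Λ : AddSubgroup (ZMod N × ZMod N)} {p : ZMod N × ZMod N} :
    p ∈ adjFinset Λ ↔ p ∈ adjSet Λ := by
  rw [adjFinset, Set.Finite.mem_toFinset]

lemma lemA (Γ : AddSubgroup (ZMod N × ZMod N)) (p : ZMod N × ZMod N) :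
    ∑ q ∈ subFinset Γ, E (q.2 * p.1 - q.1 * p.2)
      = if p ∈ adjFinset Γ then ((subFinset Γ).card : ℂ) else 0 := by
  by_cases hp : p ∈ adjFinset Γ
  · rw [if_pos hp, mem_adjFinset] at *
    have : ∀ q ∈ subFinset Γ, E (q.2 * p.1 - q.1 * p.2) = 1 := by
      intro q hq
      rw [mem_subFinset] at hq
      have h1 := hp q hq
      have h2 : q.2 * p.1 - q.1 * p.2 = 0 := by linear_combination -h1
      rw [h2, E_zero]
    rw [Finset.sum_congr rfl this]
    simp
  · rw [if_neg hp, mem_adjFinset, mem_adjSet] at *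
    push_neg at hp
    obtain ⟨q₀, hq₀, hc⟩ := hp
    set S := ∑ q ∈ subFinset Γ, E (q.2 * p.1 - q.1 * p.2) with hS
    have hc' : q₀.2 * p.1 - q₀.1 * p.2 ≠ 0 := by
      intro h; exact hc (by linear_combination -h)
    have key : S * E (q₀.2 * p.1 - q₀.1 * p.2) = S := by
      rw [hS, Finset.sum_mul]
      refine Finset.sum_nbij' (fun q => q + q₀) (fun q => q - q₀) ?_ ?_ ?_ ?_ ?_
      · intro q hq
        rw [mem_subFinset] at hq ⊢
        exact Γ.add_mem hq hq₀
      · intro q hq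
        rw [mem_subFinset] at hq ⊢
        exact Γ.sub_mem hq hq₀
      · intro q _; simp
      · intro q _; simp
      · intro q _
        rw [← E_add]
        congr 1
        simp only [Prod.fst_add, Prod.snd_add]
        ring
    have hE1 : E (q₀.2 * p.1 - q₀.1 * p.2) ≠ 1 := fun h => hc' (E_eq_one_iff.mp h)
    by_contra hS0
    exact hE1 (mul_left_cancel₀ hS0 (by rw [key, mul_one]))

lemma card_mul_card (Γ : AddSubgroup (ZMod N × ZMod N)) :
    ((subFinset Γ).card : ℂ) * ((subFinset (adjGroup Γ)).card : ℂ) = (N : ℂ)^2 := by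
  classical
  have h1 : ∑ p : ZMod N × ZMod N, ∑ q ∈ subFinset Γ, E (q.2 * p.1 - q.1 * p.2)
      = ((subFinset Γ).card : ℂ) * ((subFinset (adjGroup Γ)).card : ℂ) := by
    simp_rw [lemA Γ]
    rw [Finset.sum_ite_mem, Finset.univ_inter, Finset.sum_const, nsmul_eq_mul, mul_comm]
    rw [adjFinset_eq]
  have h2 : ∑ p : ZMod N × ZMod N, ∑ q ∈ subFinset Γ, E (q.2 * p.1 - q.1 * p.2)
      = (N : ℂ)^2 := by
    rw [Finset.sum_comm]
    have hinner : ∀ q : ZMod N × ZMod N,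
        ∑ p : ZMod N × ZMod N, E (q.2 * p.1 - q.1 * p.2)
        = (if q.2 = 0 then (N:ℂ) else 0) * (if q.1 = 0 then (N:ℂ) else 0) := by
      intro q
      have hsplit : ∀ x y : ZMod N, E (q.2 * x - q.1 * y) = E (q.2 * x) * E (-q.1 * y) := by
        intro x y; rw [← E_add]; congr 1; ring
      rw [Fintype.sum_prod_type]
      simp only [hsplit]
      rw [← Finset.sum_mul_sum]
      rw [char_sum q.2, char_sum (-q.1)]
      simp only [neg_eq_zero]
    simp_rw [hinner]
    have : ∀ q : ZMod N × ZMod N,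
        (if q.2 = 0 then (N:ℂ) else 0) * (if q.1 = 0 then (N:ℂ) else 0)
        = if q = 0 then (N:ℂ)^2 else 0 := by
      rintro ⟨q1, q2⟩
      by_cases h1 : q1 = 0 <;> by_cases h2 : q2 = 0 <;>
        simp [h1, h2, Prod.ext_iff, sq]
    simp_rw [this]
    rw [Finset.sum_ite_eq' (subFinset Γ) 0 (fun _ => (N:ℂ)^2)]
    rw [if_pos (mem_subFinset.mpr Γ.zero_mem)]
  rw [← h1, h2]

lemma card_mul_card' (Γ : AddSubgroup (ZMod N × ZMod N)) :
    (subFinset Γ).card * (subFinset (adjGroup Γ)).card = N^2 := by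
  have := card_mul_card Γ
  exact_mod_cast this

lemma subFinset_card_pos (Γ : AddSubgroup (ZMod N × ZMod N)) :
    0 < (subFinset Γ).card :=
  Finset.card_pos.mpr ⟨0, mem_subFinset.mpr Γ.zero_mem⟩

lemma adj_adj (Λ : AddSubgroup (ZMod N × ZMod N)) : adjGroup (adjGroup Λ) = Λ := by
  have hle : subFinset Λ ⊆ subFinset (adjGroup (adjGroup Λ)) := by
    intro q hq
    rw [mem_subFinset] at hq ⊢
    intro p hp
    have := hp q hq
    linear_combination -this
  have hcard : (subFinset (adjGroup (adjGroup Λ))).card = (subFinset Λ).card := by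
    have h1 := card_mul_card' (adjGroup Λ)
    have h2 := card_mul_card' Λ
    have h3 : (subFinset Λ).card * (subFinset (adjGroup Λ)).card
        = (subFinset (adjGroup Λ)).card * (subFinset (adjGroup (adjGroup Λ))).card := by
      rw [h1, h2]
    rw [mul_comm] at h3
    exact (Nat.eq_of_mul_eq_mul_left (subFinset_card_pos (adjGroup Λ)) h3.symm)
  have : subFinset Λ = subFinset (adjGroup (adjGroup Λ)) :=
    Finset.eq_of_subset_of_card_le hle (le_of_eq hcard)
  ext q
  rw [← mem_subFinset, ← this, mem_subFinset]

/- ## Poisson summation over the subgroup (Lemma B) -/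

lemma lemB (Γ : AddSubgroup (ZMod N × ZMod N)) (W : ZMod N → ZMod N → ℂ) :
    (N:ℂ) * ∑ q ∈ subFinset Γ, ∑ a, W a q.1 * E (q.2 * a)
      = ((subFinset Γ).card : ℂ) * ∑ p ∈ subFinset (adjGroup Γ), ∑ b, W p.1 b * E (p.2 * b) := by
  classical
  have step1 : ∀ (q : ZMod N × ZMod N) (a : ZMod N),
      (N:ℂ) * (W a q.1 * E (q.2 * a))
        = ∑ t, ∑ b, W a b * (E (q.2 * a + q.1 * t) * E (-(t * b))) := by
    intro q a
    rw [Finset.sum_comm]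
    have h1 : ∀ b : ZMod N, ∑ t, W a b * (E (q.2 * a + q.1 * t) * E (-(t * b)))
        = W a b * E (q.2 * a) * ∑ t, E ((q.1 - b) * t) := by
      intro b
      rw [Finset.mul_sum]
      refine Finset.sum_congr rfl fun t _ => ?_
      have h2 : q.2 * a + q.1 * t = (q.2 * a + (q.1 - b) * t) + t * b := by ring
      have h3 : E (q.2 * a + q.1 * t) = E (q.2 * a) * E ((q.1 - b) * t) * E (t * b) := by
        rw [h2, E_add, E_add]
      rw [h3]
      have h4 : E (t*b) * E (-(t*b)) = 1 := by rw [← E_add]; simp [E_zero]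
      linear_combination W a b * E (q.2 * a) * E ((q.1 - b) * t) * h4
    rw [Finset.sum_congr rfl fun b _ => h1 b]
    simp_rw [char_sum]
    rw [Finset.sum_eq_single_of_mem q.1 (Finset.mem_univ _)]
    · rw [if_pos (sub_self q.1 ▸ rfl)]
      ring
    · intro b _ hb
      rw [if_neg (sub_ne_zero.mpr (Ne.symm hb)), mul_zero]
  calc (N:ℂ) * ∑ q ∈ subFinset Γ, ∑ a, W a q.1 * E (q.2 * a)
      = ∑ q ∈ subFinset Γ, ∑ a, (N:ℂ) * (W a q.1 * E (q.2 * a)) := by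
        rw [Finset.mul_sum]
        exact Finset.sum_congr rfl fun q _ => Finset.mul_sum _ _ _
    _ = ∑ q ∈ subFinset Γ, ∑ a, ∑ t, ∑ b, W a b * (E (q.2 * a + q.1 * t) * E (-(t * b))) := by
        exact Finset.sum_congr rfl fun q _ => Finset.sum_congr rfl fun a _ => step1 q a
    _ = ∑ a, ∑ t, ∑ b, ((W a b * E (-(t * b))) * ∑ q ∈ subFinset Γ, E (q.2 * a + q.1 * t)) := by
        rw [Finset.sum_comm]
        refine Finset.sum_congr rfl fun a _ => ?_
        rw [Finset.sum_comm]
        refine Finset.sum_congr rfl fun t _ => ?_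
        rw [Finset.sum_comm]
        refine Finset.sum_congr rfl fun b _ => ?_
        rw [Finset.mul_sum]
        exact Finset.sum_congr rfl fun q _ => by ring
    _ = ∑ a, ∑ t, ((if (a, -t) ∈ adjFinset Γ then ((subFinset Γ).card : ℂ) else 0)
          * ∑ b, W a b * E (-(t * b))) := by
        refine Finset.sum_congr rfl fun a _ => Finset.sum_congr rfl fun t _ => ?_
        have h5 : ∑ q ∈ subFinset Γ, E (q.2 * a + q.1 * t)
            = if (a, -t) ∈ adjFinset Γ then ((subFinset Γ).card : ℂ) else 0 := by
          rw [← lemA Γ (a, -t)]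
          exact Finset.sum_congr rfl fun q _ => by congr 1; ring
        simp_rw [h5]
        rw [Finset.mul_sum]
        exact Finset.sum_congr rfl fun b _ => by ring
    _ = ∑ a, ∑ s, ((if (a, s) ∈ adjFinset Γ then ((subFinset Γ).card : ℂ) else 0)
          * ∑ b, W a b * E (s * b)) := by
        refine Finset.sum_congr rfl fun a _ => ?_
        refine Fintype.sum_equiv (Equiv.neg (ZMod N)) _ _ fun s => ?_
        simp only [Equiv.neg_apply]
        congr 1
        exact Finset.sum_congr rfl fun b _ => by rw [neg_mul]
    _ = ∑ p : ZMod N × ZMod N, ((if p ∈ adjFinset Γ then ((subFinset Γ).card : ℂ) else 0)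
          * ∑ b, W p.1 b * E (p.2 * b)) := by
        rw [Fintype.sum_prod_type]
    _ = ((subFinset Γ).card : ℂ) * ∑ p ∈ subFinset (adjGroup Γ), ∑ b, W p.1 b * E (p.2 * b) := by
        simp_rw [ite_mul, zero_mul]
        rw [Finset.sum_ite_mem, Finset.univ_inter, adjFinset_eq, Finset.mul_sum]

/- ## Janssen representation -/

lemma janssen (Γ : AddSubgroup (ZMod N × ZMod N)) (g h u : ZMod N → ℂ) :
    (N:ℂ) • (∑ q ∈ subFinset Γ, inn u (tfShift N q.1 q.2 h) • tfShift N q.1 q.2 g)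
      = ((subFinset Γ).card : ℂ) •
        ∑ p ∈ subFinset (adjGroup Γ), inn g (tfShift N p.1 p.2 h) • tfShift N p.1 p.2 u := by
  funext j
  simp only [Pi.smul_apply, Finset.sum_apply, smul_eq_mul]
  set W : ZMod N → ZMod N → ℂ :=
    fun a b => u (j - a) * starRingEnd ℂ (h (j - a - b)) * g (j - b) with hW
  have claim1 : ∀ q : ZMod N × ZMod N,
      inn u (tfShift N q.1 q.2 h) * tfShift N q.1 q.2 g j = ∑ a, W a q.1 * E (q.2 * a) := by
    intro q
    rw [inn, Finset.sum_mul]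
    rw [← Fintype.sum_equiv (Equiv.subLeft j) _
        (fun m => u m * starRingEnd ℂ (tfShift N q.1 q.2 h m) * tfShift N q.1 q.2 g j)
        (fun a => rfl)]
    refine Finset.sum_congr rfl fun a _ => ?_
    simp only [Equiv.subLeft_apply, tfShift_apply, map_mul, conj_E, hW]
    have h6 : -(q.2 * (j - a)) = q.2 * a + -(q.2 * j) := by ring
    rw [h6, E_add]
    have h7 : E (-(q.2*j)) * E (q.2*j) = 1 := by rw [← E_add]; simp [E_zero]
    linear_combination u (j - a) * starRingEnd ℂ (h (j - a - q.1)) * g (j - q.1)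
      * E (q.2 * a) * h7
  have claim2 : ∀ p : ZMod N × ZMod N,
      inn g (tfShift N p.1 p.2 h) * tfShift N p.1 p.2 u j = ∑ b, W p.1 b * E (p.2 * b) := by
    intro p
    rw [inn, Finset.sum_mul]
    rw [← Fintype.sum_equiv (Equiv.subLeft j) _
        (fun m => g m * starRingEnd ℂ (tfShift N p.1 p.2 h m) * tfShift N p.1 p.2 u j)
        (fun b => rfl)]
    refine Finset.sum_congr rfl fun b _ => ?_
    simp only [Equiv.subLeft_apply, tfShift_apply, map_mul, conj_E, hW]
    have h6 : -(p.2 * (j - b)) = p.2 * b + -(p.2 * j) := by ring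
    rw [h6, E_add]
    have h7 : E (-(p.2*j)) * E (p.2*j) = 1 := by rw [← E_add]; simp [E_zero]
    have h8 : j - b - p.1 = j - p.1 - b := by ring
    rw [h8]
    linear_combination g (j - b) * starRingEnd ℂ (h (j - p.1 - b)) * u (j - p.1)
      * E (p.2 * b) * h7
  rw [Finset.mul_sum, Finset.mul_sum]
  simp_rw [claim1, claim2]
  have := lemB Γ W
  rw [Finset.mul_sum, Finset.mul_sum] at this
  exact this

/- ## Linear independence of the time-frequency shift operators -/

lemma shift_indep (c : ZMod N × ZMod N → ℂ)
    (h : ∑ μ : ZMod N × ZMod N, c μ • tfShift N μ.1 μ.2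
        = (0 : (ZMod N → ℂ) →ₗ[ℂ] (ZMod N → ℂ)))
    (ν : ZMod N × ZMod N) : c ν = 0 := by
  classical
  obtain ⟨k₀, r₀⟩ := ν
  have h1 : ∀ (f : ZMod N → ℂ) (x : ZMod N),
      ∑ μ : ZMod N × ZMod N, c μ * (E (μ.2 * x) * f (x - μ.1)) = 0 := by
    intro f x
    have h0 := congrFun (LinearMap.congr_fun h f) x
    simp only [LinearMap.sum_apply, LinearMap.smul_apply, Finset.sum_apply, Pi.smul_apply,
      smul_eq_mul, LinearMap.zero_apply, Pi.zero_apply] at h0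
    rw [← h0]
    exact Finset.sum_congr rfl fun μ _ => by rw [tfShift_apply]
  have h2 : ∀ a : ZMod N,
      ∑ μ : ZMod N × ZMod N, c μ * (E (μ.2 * (a + k₀)) * (if μ.1 = k₀ then (1:ℂ) else 0)) = 0 := by
    intro a
    have h0 := h1 (Pi.single a 1) (a + k₀)
    refine Eq.trans (Finset.sum_congr rfl fun μ _ => ?_) h0
    have hiff : (a + k₀ - μ.1 = a) ↔ (μ.1 = k₀) := by
      rw [sub_eq_iff_eq_add, add_right_inj, eq_comm]
    simp only [Pi.single_apply, hiff]
  have h_per : ∀ μ : ZMod N × ZMod N,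
      ∑ a : ZMod N, E (-(r₀ * (a + k₀))) * (c μ * (E (μ.2 * (a + k₀)) * (if μ.1 = k₀ then (1:ℂ) else 0)))
        = (c μ * (if μ.1 = k₀ then (1:ℂ) else 0)) * (if μ.2 = r₀ then (N:ℂ) else 0) := by
    intro μ
    have hterm : ∀ a : ZMod N,
        E (-(r₀ * (a + k₀))) * (c μ * (E (μ.2 * (a + k₀)) * (if μ.1 = k₀ then (1:ℂ) else 0)))
          = (c μ * (if μ.1 = k₀ then (1:ℂ) else 0)) * E ((μ.2 - r₀) * (a + k₀)) := by
      intro a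
      have harg : (μ.2 - r₀) * (a + k₀) = μ.2 * (a + k₀) + -(r₀ * (a + k₀)) := by ring
      rw [harg, E_add]
      ring
    simp_rw [hterm]
    rw [← Finset.mul_sum]
    congr 1
    refine Eq.trans (Fintype.sum_equiv (Equiv.addRight k₀) _
      (fun x => E ((μ.2 - r₀) * x)) (fun a => rfl)) ?_
    rw [char_sum]
    simp only [sub_eq_zero]
  have h4 : ∀ a : ZMod N,
      ∑ μ : ZMod N × ZMod N, E (-(r₀ * (a + k₀))) * (c μ * (E (μ.2 * (a + k₀)) * (if μ.1 = k₀ then (1:ℂ) else 0))) = 0 := by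
    intro a
    rw [← Finset.mul_sum, h2 a, mul_zero]
  have hfinal : ∑ μ : ZMod N × ZMod N,
      (c μ * (if μ.1 = k₀ then (1:ℂ) else 0)) * (if μ.2 = r₀ then (N:ℂ) else 0) = 0 := by
    calc ∑ μ : ZMod N × ZMod N, (c μ * (if μ.1 = k₀ then (1:ℂ) else 0)) * (if μ.2 = r₀ then (N:ℂ) else 0)
        = ∑ μ : ZMod N × ZMod N, ∑ a : ZMod N,
            E (-(r₀ * (a + k₀))) * (c μ * (E (μ.2 * (a + k₀)) * (if μ.1 = k₀ then (1:ℂ) else 0))) :=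
          Finset.sum_congr rfl fun μ _ => (h_per μ).symm
      _ = ∑ a : ZMod N, ∑ μ : ZMod N × ZMod N,
            E (-(r₀ * (a + k₀))) * (c μ * (E (μ.2 * (a + k₀)) * (if μ.1 = k₀ then (1:ℂ) else 0))) :=
          Finset.sum_comm
      _ = 0 := Finset.sum_eq_zero fun a _ => h4 a
  rw [Finset.sum_eq_single (k₀, r₀)] at hfinal
  · simp only [eq_self_iff_true, if_true, mul_one] at hfinal
    have hN : (N:ℂ) ≠ 0 := Nat.cast_ne_zero.mpr (NeZero.ne N)
    exact (mul_eq_zero.mp hfinal).resolve_right hN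
  · rintro ⟨b1, b2⟩ _ hb
    by_cases hb1 : b1 = k₀
    · by_cases hb2 : b2 = r₀
      · exact absurd (by rw [hb1, hb2]) hb
      · simp [hb2]
    · simp [hb1]
  · intro habs
    exact absurd (Finset.mem_univ _) habs

theorem main (N : ℕ) [NeZero N]
    (Λ : AddSubgroup (ZMod N × ZMod N)) (g : ZMod N → ℂ) :
    Submodule.span ℂ
        ((fun lam : ZMod N × ZMod N => tfShift N lam.1 lam.2 g) '' (Λ : Set (ZMod N × ZMod N)))
          = ⊤ ↔
      LinearIndependent ℂ (fun mu : adjSet Λ => tfShift N mu.1.1 mu.1.2 g) := by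
  classical
  haveI : Fintype ↥(adjSet Λ) := Fintype.ofFinite _
  constructor
  · -- span = ⊤ → linear independence over the adjoint
    intro hspan
    rw [Fintype.linearIndependent_iff]
    intro c hc ν
    set c' : ZMod N × ZMod N → ℂ :=
      fun p => if hp : p ∈ adjSet Λ then c ⟨p, hp⟩ else 0 with hc'
    set T : (ZMod N → ℂ) →ₗ[ℂ] (ZMod N → ℂ) :=
      ∑ μ : ZMod N × ZMod N, c' μ • tfShift N μ.1 μ.2 with hT
    have hsub : ∀ f : ZMod N → ℂ,
        T f = ∑ μ : ↥(adjSet Λ), c μ • tfShift N μ.1.1 μ.1.2 f := by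
      intro f
      rw [hT, LinearMap.sum_apply]
      simp only [LinearMap.smul_apply]
      rw [← Finset.sum_filter_of_ne (p := fun p => p ∈ adjSet Λ)
        (fun x _ hx => by
          by_contra hmem
          exact hx (by rw [hc']; simp [hmem]))]
      rw [Finset.sum_subtype (p := fun p => p ∈ adjSet Λ)
        (Finset.univ.filter (fun p => p ∈ adjSet Λ))
        (fun x => by simp) (fun p => c' p • tfShift N p.1 p.2 f)]
      refine Finset.sum_congr rfl fun μ _ => ?_
      rw [hc']
      simp only [dif_pos μ.2]
    have hTlam : ∀ lam ∈ (Λ : Set (ZMod N × ZMod N)), T (tfShift N lam.1 lam.2 g) = 0 := by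
      intro lam hlam
      rw [hsub]
      have hcomm : ∀ μ : ↥(adjSet Λ),
          tfShift N μ.1.1 μ.1.2 (tfShift N lam.1 lam.2 g)
            = tfShift N lam.1 lam.2 (tfShift N μ.1.1 μ.1.2 g) := by
        intro μ
        refine tfShift_comm ?_ g
        have h0 := μ.2 lam hlam
        linear_combination h0
      simp_rw [hcomm]
      have hmap : ∑ μ : ↥(adjSet Λ), c μ • tfShift N lam.1 lam.2 (tfShift N μ.1.1 μ.1.2 g)
          = tfShift N lam.1 lam.2 (∑ μ : ↥(adjSet Λ), c μ • tfShift N μ.1.1 μ.1.2 g) := by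
        rw [map_sum]
        exact Finset.sum_congr rfl fun μ _ => (map_smul _ _ _).symm
      rw [hmap, hc, map_zero]
    have hT0 : T = 0 := by
      refine LinearMap.ext_on hspan ?_
      rintro x ⟨lam, hlam, rfl⟩
      rw [hTlam lam hlam]
      rfl
    have := shift_indep c' hT0 ν.1
    rw [hc'] at this
    simp only [dif_pos ν.2] at this
    rwa [Subtype.coe_eta] at this
  · -- linear independence over the adjoint → span = ⊤
    intro hLI
    by_contra hne
    have hlt : Submodule.span ℂ
        ((fun lam : ZMod N × ZMod N => tfShift N lam.1 lam.2 g) '' (Λ : Set (ZMod N × ZMod N))) < ⊤ :=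
      lt_top_iff_ne_top.mpr hne
    obtain ⟨φ, hφne, hφbot⟩ := Submodule.exists_dual_map_eq_bot_of_lt_top hlt inferInstance
    set f₀ : ZMod N → ℂ := fun x => starRingEnd ℂ (φ (Pi.single x 1)) with hf₀
    have hrep : ∀ f : ZMod N → ℂ, φ f = inn f f₀ := by
      intro f
      have hdecomp : f = ∑ x : ZMod N, f x • (Pi.single x 1 : ZMod N → ℂ) := by
        conv_lhs => rw [← Finset.univ_sum_single f]
        refine Finset.sum_congr rfl fun x _ => ?_
        rw [← Pi.single_smul, smul_eq_mul, mul_one]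
      rw [inn]
      conv_lhs => rw [hdecomp]
      rw [map_sum]
      refine Finset.sum_congr rfl fun x _ => ?_
      rw [map_smul, smul_eq_mul, hf₀]
      simp
    have hf₀ne : f₀ ≠ 0 := by
      intro h0
      apply hφne
      apply LinearMap.ext
      intro f
      rw [LinearMap.zero_apply, hrep f, h0]
      simp [inn]
    have horth : ∀ q ∈ Λ, inn f₀ (tfShift N q.1 q.2 g) = 0 := by
      intro q hq
      have hmem : tfShift N q.1 q.2 g ∈ Submodule.span ℂ
          ((fun lam : ZMod N × ZMod N => tfShift N lam.1 lam.2 g) '' (Λ : Set (ZMod N × ZMod N))) :=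
        Submodule.subset_span ⟨q, hq, rfl⟩
      have h0 : φ (tfShift N q.1 q.2 g) = 0 := by
        have := Submodule.mem_map_of_mem (f := φ) hmem
        rw [hφbot] at this
        exact (Submodule.mem_bot ℂ).mp this
      rw [hrep] at h0
      rw [inn_conj, h0, map_zero]
    have hJ := janssen (adjGroup Λ) g f₀ f₀
    rw [adj_adj] at hJ
    have hRHS0 : ∑ p ∈ subFinset Λ, inn g (tfShift N p.1 p.2 f₀) • tfShift N p.1 p.2 f₀
        = (0 : ZMod N → ℂ) := by
      refine Finset.sum_eq_zero fun p hp => ?_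
      rw [mem_subFinset] at hp
      have hneg : (-p.1, -p.2) ∈ Λ := Λ.neg_mem hp
      have h0 : inn f₀ (tfShift N (-p.1) (-p.2) g) = 0 := horth (-p.1, -p.2) hneg
      rw [inn_swap p.1 p.2 f₀ g, h0, map_zero, mul_zero, zero_smul]
    have hN : (N:ℂ) ≠ 0 := Nat.cast_ne_zero.mpr (NeZero.ne N)
    have hLHS0 : ∑ q ∈ subFinset (adjGroup Λ), inn f₀ (tfShift N q.1 q.2 f₀) • tfShift N q.1 q.2 g
        = (0 : ZMod N → ℂ) := by
      rw [hRHS0, smul_zero] at hJ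
      rcases smul_eq_zero.mp hJ with h | h
      · exact absurd h hN
      · exact h
    have hsum : ∑ μ : ↥(adjSet Λ), inn f₀ (tfShift N μ.1.1 μ.1.2 f₀) • tfShift N μ.1.1 μ.1.2 g
        = (0 : ZMod N → ℂ) := by
      rw [← Finset.sum_subtype (p := fun p => p ∈ adjSet Λ) (subFinset (adjGroup Λ))
        (fun x => by rw [mem_subFinset]; exact Iff.rfl)
        (fun p => inn f₀ (tfShift N p.1 p.2 f₀) • tfShift N p.1 p.2 g)]
      exact hLHS0
    have hco := Fintype.linearIndependent_iff.mp hLI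
      (fun μ => inn f₀ (tfShift N μ.1.1 μ.1.2 f₀)) hsum
      ⟨(0,0), fun q _ => by simp⟩
    rw [tfShift_zero] at hco
    exact inn_self_ne_zero hf₀ne hco

end RonShen

/-- **Ron–Shen duality principle**: the Gabor system `{π(λ)g : λ ∈ Λ}` spans `ℂ^N` if and
only if the family `(π(μ)g)_{μ ∈ Λ°}` over the adjoint subgroup is linearly independent. -/
theorem ron_shen_duality (N : ℕ) [NeZero N]
    (Λ : AddSubgroup (ZMod N × ZMod N)) (g : ZMod N → ℂ) :
    Submodule.span ℂ
        ((fun lam : ZMod N × ZMod N => tfShift N lam.1 lam.2 g) '' (Λ : Set (ZMod N × ZMod N)))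
          = ⊤ ↔
      LinearIndependent ℂ (fun mu : adjSet Λ => tfShift N mu.1.1 mu.1.2 g) := by
  exact RonShen.main N Λ g
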